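/- arXiv:2503.03661 — 4 statements merged into one kernel-verified Lean document; each statement's English description precedes it below -/
import Mathlib

section
/- Let n > 2, k ≥ 1 odd, and set b = 2k/(k+1), δ = (n(k+1)-2k)/(2k), a = 1/b. If v ∈ C²((0,∞)) satisfies (r^{n-k}(v')^k)' + r^{n-1}(r v' + κ v + c_{n,k}^{-1}|v|^{q-1}v) = 0 on (0,∞), and θ is defined by v(r) = θ(s) with s = a r^b, then θ satisfies (s^δ (θ')^k)' + s^δ (b s θ' + κ θ + c_{n,k}^{-1}|θ|^{q-1}θ) = 0 on (0,∞). -/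
/-!
The substitution is inverted by `φ(s) = (b s)^(1/b)`, so `θ = v ∘ φ` and, with `x = b s`,
`φ(s) = x^(1/b)`, `φ'(s) = x^(1/b - 1)` and `s^δ = a^δ x^δ`. The relations `b (δ + 1) = n` and
`b (k + 1) = 2k` are exactly what makes every power of `x` match: `s^δ (θ')^k = a^δ r^(n-k) (v')^k`
at `r = φ(s)`, the chain rule turns `(s^δ (θ')^k)'` into `a^δ φ' (r^(n-k) (v')^k)'`, and
`a^δ r^(n-1) φ' = s^δ`, `r v'(r) = b s θ'(s)` carry the remaining terms over.
-/

open Real Set Filter Topology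

section PowerSubstitution

variable {b : ℝ}

lemma hasDerivAt_mul_rpow_inv (hb : b ≠ 0) {s : ℝ} (hs : 0 < b * s) :
    HasDerivAt (fun t => (b * t) ^ b⁻¹) ((b * s) ^ (b⁻¹ - 1)) s :=
  ((Real.hasDerivAt_rpow_const (Or.inl hs.ne')).comp s
    ((hasDerivAt_id s).const_mul b)).congr_deriv (by field_simp)

lemma eq_comp_mul_rpow_inv {v θ : ℝ → ℝ} (hb : 0 < b) (hθ : ∀ r > (0 : ℝ), v r = θ (b⁻¹ * r ^ b))
    {σ : ℝ} (hσ : 0 < σ) : θ σ = v ((b * σ) ^ b⁻¹) := by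
  have hbσ : 0 < b * σ := mul_pos hb hσ
  rw [hθ _ (rpow_pos_of_pos hbσ _), ← rpow_mul hbσ.le, inv_mul_cancel₀ hb.ne', rpow_one,
    ← mul_assoc, inv_mul_cancel₀ hb.ne', one_mul]

lemma hasDerivAt_of_eq_comp_mul_rpow_inv {v θ : ℝ → ℝ} (hb : 0 < b)
    (hv : DifferentiableOn ℝ v (Ioi 0)) (hθ : ∀ σ > (0 : ℝ), θ σ = v ((b * σ) ^ b⁻¹))
    {s : ℝ} (hs : 0 < s) :
    HasDerivAt θ (deriv v ((b * s) ^ b⁻¹) * (b * s) ^ (b⁻¹ - 1)) s := by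
  have hbs : 0 < b * s := mul_pos hb hs
  have hvφ : HasDerivAt v (deriv v ((b * s) ^ b⁻¹)) ((b * s) ^ b⁻¹) :=
    (hv.differentiableAt (Ioi_mem_nhds (rpow_pos_of_pos hbs _))).hasDerivAt
  refine (hvφ.comp s (hasDerivAt_mul_rpow_inv hb.ne' hbs)).congr_of_eventuallyEq ?_
  filter_upwards [Ioi_mem_nhds hs] with σ hσ using hθ σ hσ

lemma rpow_eq_inv_rpow_mul_mul_rpow (hb : 0 < b) {σ : ℝ} (hσ : 0 < σ) (δ : ℝ) :
    σ ^ δ = b⁻¹ ^ δ * (b * σ) ^ δ := by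
  rw [← mul_rpow (inv_nonneg.2 hb.le) (mul_pos hb hσ).le, ← mul_assoc, inv_mul_cancel₀ hb.ne',
    one_mul]

end PowerSubstitution

section Weights

variable {n b δ : ℝ} {k : ℕ}

lemma rpow_mul_pow_rpow_sub_one_eq (hb : 0 < b) (hδ : b * (δ + 1) = n)
    (hk : b * (k + 1) = 2 * k) {σ : ℝ} (hσ : 0 < σ) :
    σ ^ δ * ((b * σ) ^ (b⁻¹ - 1)) ^ k = b⁻¹ ^ δ * ((b * σ) ^ b⁻¹) ^ (n - k) := by
  have hx : 0 < b * σ := mul_pos hb hσ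
  have hexp : δ + (b⁻¹ - 1) * k = b⁻¹ * (n - k) := by
    field_simp
    linear_combination hδ - hk
  rw [rpow_eq_inv_rpow_mul_mul_rpow hb hσ, ← rpow_natCast, ← rpow_mul hx.le, ← rpow_mul hx.le,
    mul_assoc, ← rpow_add hx, hexp]

lemma inv_rpow_mul_rpow_sub_one_mul_eq (hb : 0 < b) (hδ : b * (δ + 1) = n) {σ : ℝ}
    (hσ : 0 < σ) :
    b⁻¹ ^ δ * (((b * σ) ^ b⁻¹) ^ (n - 1) * (b * σ) ^ (b⁻¹ - 1)) = σ ^ δ := by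
  have hx : 0 < b * σ := mul_pos hb hσ
  have hexp : b⁻¹ * (n - 1) + (b⁻¹ - 1) = δ := by
    field_simp
    linear_combination -hδ
  rw [← rpow_mul hx.le, ← rpow_add hx, hexp, rpow_eq_inv_rpow_mul_mul_rpow hb hσ]

end Weights

theorem radial_equation_comp_mul_rpow_inv {n b δ : ℝ} {k : ℕ} (hb : 0 < b)
    (hδ : b * (δ + 1) = n) (hk : b * (k + 1) = 2 * k) (N : ℝ → ℝ → ℝ) {v θ : ℝ → ℝ}
    (hv : DifferentiableOn ℝ v (Ioi 0)) (hv' : DifferentiableOn ℝ (deriv v) (Ioi 0))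
    (hode : ∀ r > (0 : ℝ), deriv (fun ρ => ρ ^ (n - k) * deriv v ρ ^ k) r +
      r ^ (n - 1) * N (r * deriv v r) (v r) = 0)
    (hθ : ∀ σ > (0 : ℝ), θ σ = v ((b * σ) ^ b⁻¹)) {s : ℝ} (hs : 0 < s) :
    deriv (fun σ => σ ^ δ * deriv θ σ ^ k) s + s ^ δ * N (b * s * deriv θ s) (θ s) = 0 := by
  set F : ℝ → ℝ := fun ρ => ρ ^ (n - k) * deriv v ρ ^ k
  set r := (b * s) ^ b⁻¹ with hr
  have hbs : 0 < b * s := mul_pos hb hs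
  have hr0 : 0 < r := rpow_pos_of_pos hbs _
  have hθ' : ∀ σ > (0 : ℝ), deriv θ σ = deriv v ((b * σ) ^ b⁻¹) * (b * σ) ^ (b⁻¹ - 1) :=
    fun σ hσ => (hasDerivAt_of_eq_comp_mul_rpow_inv hb hv hθ hσ).deriv
  have hweight : (fun σ => σ ^ δ * deriv θ σ ^ k) =ᶠ[𝓝 s]
      fun σ => b⁻¹ ^ δ * F ((b * σ) ^ b⁻¹) := by
    filter_upwards [Ioi_mem_nhds hs] with σ hσ
    rw [hθ' σ hσ, mul_pow]
    linear_combination deriv v ((b * σ) ^ b⁻¹) ^ k * rpow_mul_pow_rpow_sub_one_eq hb hδ hk hσ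
  have hF : DifferentiableAt ℝ F r :=
    ((Real.hasDerivAt_rpow_const (Or.inl hr0.ne')).differentiableAt).mul
      ((hv'.differentiableAt (Ioi_mem_nhds hr0)).pow k)
  have hderiv : deriv (fun σ => σ ^ δ * deriv θ σ ^ k) s =
      b⁻¹ ^ δ * (deriv F r * (b * s) ^ (b⁻¹ - 1)) := by
    rw [hweight.deriv_eq]
    exact ((hF.hasDerivAt.comp s (hasDerivAt_mul_rpow_inv hb.ne' hbs)).const_mul _).deriv
  have hrv : r * deriv v r = b * s * deriv θ s := by
    have hφ : b * s * (b * s) ^ (b⁻¹ - 1) = r := by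
      rw [← rpow_one_add' hbs.le (by simp [hb.ne']), add_sub_cancel]
    rw [hθ' s hs, ← hr, ← hφ]
    ring
  have hθs : θ s = v r := hθ s hs
  rw [hderiv, hθs, ← hrv, ← inv_rpow_mul_rpow_sub_one_mul_eq hb hδ hs,
    show deriv F r = -(r ^ (n - 1) * N (r * deriv v r) (v r)) by linarith [hode r hr0]]
  ring

theorem stmt2_general (n k : ℕ) (q κ c a b δ : ℝ) (hk : 1 ≤ k)
    (hb : b = 2 * k / (k + 1)) (hδ : δ = ((n : ℝ) * (k + 1) - 2 * k) / (2 * k))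
    (ha : a = 1 / b)
    (v θ : ℝ → ℝ)
    (hv : ContDiffOn ℝ 2 v (Set.Ioi 0))
    (hode : ∀ r > (0 : ℝ),
      deriv (fun ρ => ρ ^ ((n : ℝ) - k) * (deriv v ρ) ^ k) r +
        r ^ ((n : ℝ) - 1) * (r * deriv v r + κ * v r + c⁻¹ * |v r| ^ (q - 1) * v r) = 0)
    (hθ : ∀ r > (0 : ℝ), v r = θ (a * r ^ b)) :
    ∀ s > (0 : ℝ),
      deriv (fun σ => σ ^ δ * (deriv θ σ) ^ k) s +
        s ^ δ * (b * s * deriv θ s + κ * θ s + c⁻¹ * |θ s| ^ (q - 1) * θ s) = 0 := by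
  have hk0 : (0 : ℝ) < k := by exact_mod_cast hk
  have hb0 : 0 < b := by rw [hb]; positivity
  have hbδ : b * (δ + 1) = n := by rw [hb, hδ]; field_simp; ring
  have hbk : b * (k + 1) = 2 * k := by rw [hb]; field_simp
  have hv₁ : DifferentiableOn ℝ v (Ioi 0) := hv.differentiableOn two_ne_zero
  have hv₂ : DifferentiableOn ℝ (deriv v) (Ioi 0) :=
    (hv.deriv_of_isOpen (m := 1) isOpen_Ioi le_rfl).differentiableOn one_ne_zero
  rw [ha, one_div] at hθ
  intro s hs
  exact radial_equation_comp_mul_rpow_inv hb0 hbδ hbk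
    (fun p w => p + κ * w + c⁻¹ * |w| ^ (q - 1) * w) hv₁ hv₂ hode
    (fun σ hσ => eq_comp_mul_rpow_inv hb0 hθ hσ) hs

/-- Change of variables `v(r) = θ(a r^b)` with `b = 2k/(k+1)`, `a = 1/b`,
`δ = (n(k+1)-2k)/(2k)`: it transforms the radial self-similar k-Hessian equation
`(r^{n-k}(v')^k)' + r^{n-1}(r v' + κ v + c⁻¹|v|^{q-1}v) = 0` into
`(s^δ(θ')^k)' + s^δ(b s θ' + κ θ + c⁻¹|θ|^{q-1}θ) = 0`. -/
theorem stmt2 (n k : ℕ) (q κ c a b δ : ℝ) (hn : 2 < n) (hk : 1 ≤ k) (hkodd : Odd k)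
    (hq : (k : ℝ) < q) (hc : c = (1 / n) * (n.choose k))
    (hb : b = 2 * k / (k + 1)) (hδ : δ = ((n : ℝ) * (k + 1) - 2 * k) / (2 * k))
    (ha : a = 1 / b)
    (v θ : ℝ → ℝ)
    (hv : ContDiffOn ℝ 2 v (Set.Ioi 0))
    (hode : ∀ r > (0 : ℝ),
      deriv (fun ρ => ρ ^ ((n : ℝ) - k) * (deriv v ρ) ^ k) r +
        r ^ ((n : ℝ) - 1) * (r * deriv v r + κ * v r + c⁻¹ * |v r| ^ (q - 1) * v r) = 0)
    (hθ : ∀ r > (0 : ℝ), v r = θ (a * r ^ b)) :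
    ∀ s > (0 : ℝ),
      deriv (fun σ => σ ^ δ * (deriv θ σ) ^ k) s +
        s ^ δ * (b * s * deriv θ s + κ * θ s + c⁻¹ * |θ s| ^ (q - 1) * θ s) = 0 :=
  stmt2_general n k q κ c a b δ hk hb hδ ha v θ hv hode hθ
end

section
/- Let v ∈ C²((0,∞)) solve (r^{n-k}(v')^k)' + r^{n-1}(r v' + κ v + c_{n,k}^{-1}|v|^{q-1}v) = 0, and define J_κ(r) = r^κ(v + r^{-k}(v')^k). Then J_κ'(r) = r^{κ-1}((κ-n) r^{-k}(v')^k − c_{n,k}^{-1}|v|^{q-1} v) for all r > 0. -/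
open Real Filter

/-- Write `J_κ = r^κ v + r^{κ-n} · (r^{n-k}(v')^k)`; the ODE eliminates the derivative `D` of the
second factor. -/
theorem stmt8_general (n k : ℕ) (q κ c : ℝ)
    (v v' D : ℝ → ℝ)
    (hv : ∀ r > (0 : ℝ), HasDerivAt v (v' r) r)
    (hD : ∀ r > (0 : ℝ),
      HasDerivAt (fun ρ => ρ ^ ((n : ℝ) - k) * (v' ρ) ^ k) (D r) r)
    (hode : ∀ r > (0 : ℝ), D r +
        r ^ ((n : ℝ) - 1) * (r * v' r + κ * v r + c⁻¹ * |v r| ^ (q - 1) * v r) = 0) :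
    ∀ r > (0 : ℝ),
      HasDerivAt (fun ρ => ρ ^ κ * (v ρ + ρ ^ (-(k : ℝ)) * (v' ρ) ^ k))
        (r ^ (κ - 1) * ((κ - (n : ℝ)) * r ^ (-(k : ℝ)) * (v' r) ^ k -
          c⁻¹ * |v r| ^ (q - 1) * v r)) r := by
  intro r hr
  have hsum := ((hasDerivAt_rpow_const (p := κ) (Or.inl hr.ne')).mul (hv r hr)).add
    ((hasDerivAt_rpow_const (p := κ - n) (Or.inl hr.ne')).mul (hD r hr))
  refine (hsum.congr_of_eventuallyEq ?_).congr_deriv ?_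
  · filter_upwards [eventually_gt_nhds hr] with ρ hρ
    have hsplit : ρ ^ (-(k : ℝ)) = ρ ^ (κ - n) * ρ ^ ((n : ℝ) - k) / ρ ^ κ := by
      rw [← rpow_add hρ, ← rpow_sub hρ]; ring_nf
    simp only [Pi.add_apply, Pi.mul_apply, hsplit]
    field_simp
  · have e1 : r ^ (κ - n) * r ^ ((n : ℝ) - 1) = r ^ (κ - 1) := by
      rw [← rpow_add hr]; ring_nf
    have e2 : r ^ (κ - n - 1) * r ^ ((n : ℝ) - k) = r ^ (κ - 1) * r ^ (-(k : ℝ)) := by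
      rw [← rpow_add hr, ← rpow_add hr]; ring_nf
    have e3 : r ^ (κ - 1) * r = r ^ κ := by
      rw [rpow_sub_one hr.ne', div_mul_cancel₀ _ hr.ne']
    linear_combination r ^ (κ - n) * hode r hr
      - (r * v' r + κ * v r + c⁻¹ * |v r| ^ (q - 1) * v r) * e1
      + ((κ - n) * (v' r) ^ k) * e2 - (v' r) * e3

/-- The function `J_κ(r) = r^κ (v + r^{-k}(v')^k)` satisfies
`J_κ'(r) = r^{κ-1}((κ-n) r^{-k}(v')^k − c_{n,k}^{-1}|v|^{q-1} v)` along solutions of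
`(r^{n-k}(v')^k)' + r^{n-1}(r v' + κ v + c_{n,k}^{-1}|v|^{q-1}v) = 0`. -/
theorem stmt8 (n k : ℕ) (q κ c : ℝ) (hn : 2 < n) (hk : 1 ≤ k) (hkodd : Odd k)
    (hq : (k : ℝ) < q) (hc : c = (1 / n) * (n.choose k))
    (v v' D : ℝ → ℝ)
    (hv : ∀ r > (0 : ℝ), HasDerivAt v (v' r) r)
    (hD : ∀ r > (0 : ℝ),
      HasDerivAt (fun ρ => ρ ^ ((n : ℝ) - k) * (v' ρ) ^ k) (D r) r)
    (hode : ∀ r > (0 : ℝ), D r +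
        r ^ ((n : ℝ) - 1) * (r * v' r + κ * v r + c⁻¹ * |v r| ^ (q - 1) * v r) = 0) :
    ∀ r > (0 : ℝ),
      HasDerivAt (fun ρ => ρ ^ κ * (v ρ + ρ ^ (-(k : ℝ)) * (v' ρ) ^ k))
        (r ^ (κ - 1) * ((κ - (n : ℝ)) * r ^ (-(k : ℝ)) * (v' r) ^ k -
          c⁻¹ * |v r| ^ (q - 1) * v r)) r :=
  stmt8_general n k q κ c v v' D hv hD hode
end

section
/- Suppose κ < n, k ≥ 1 odd, q > k, and let γ̲ = (c_{n,k}(n-κ))^{1/(q-1)}. If θ is a C¹ solution on [0,∞) of (s^δ(θ')^k)' + s^δ(b s θ' + κθ + c_{n,k}^{-1}|θ|^{q-1}θ) = 0 with θ(0) = γ ∈ (0, γ̲] and θ'(0) = 0, and θ satisfies |θ| ≤ γ on [0,∞), then θ(s) > 0 for all s ∈ [0,∞). -/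
/-!
Let `s₀` be the first point where `θ` would become nonpositive. On `(0, s₀)` the bound
`0 < θ ≤ γ ≤ γ̲` makes the coefficient `n - κ - c⁻¹ θ^{q-1}` nonnegative, and near `s₀` (where `θ`
is small) positive, so the energy `J_δ` strictly increases from `J_δ(0) = 0`. Since `θ(s₀) ≤ 0`,
`0 < J_δ(s₀) ≤ s₀^δ θ'(s₀)^k`, and as `k` is odd, `θ'(s₀) > 0`. But `θ` decreases from positive
values to `θ(s₀) ≤ 0` as `s ↑ s₀`, which forces `θ'(s₀) ≤ 0`.
-/

open Set Filter Topology

lemma exists_first_nonpos_of_continuousOn {f : ℝ → ℝ} {l a : ℝ} (hla : l ≤ a)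
    (hf : ContinuousOn f (Icc l a)) (hfa : f a ≤ 0) :
    ∃ s₀ ∈ Icc l a, f s₀ ≤ 0 ∧ ∀ s ∈ Ico l s₀, 0 < f s := by
  set S := Icc l a ∩ f ⁻¹' Iic 0
  have hS : IsClosed S := hf.preimage_isClosed_of_isClosed isClosed_Icc isClosed_Iic
  have hSbdd : BddBelow S := ⟨l, fun x hx => hx.1.1⟩
  obtain ⟨hs₀, hfs₀⟩ := hS.csInf_mem ⟨a, ⟨hla, le_rfl⟩, hfa⟩ hSbdd
  refine ⟨sInf S, hs₀, hfs₀, fun s hs => ?_⟩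
  by_contra! hfs
  exact (csInf_le hSbdd ⟨⟨hs.1, hs.2.le.trans hs₀.2⟩, hfs⟩).not_gt hs.2

lemma HasDerivAt.nonpos_of_isMinOn_Ioo {f : ℝ → ℝ} {f' a x : ℝ} (hf : HasDerivAt f f' x)
    (hax : a < x) (hmin : IsMinOn f (Ioo a x) x) : f' ≤ 0 := by
  have hslope : Tendsto (slope f x) (𝓝[<] x) (𝓝 f') :=
    (hasDerivAt_iff_tendsto_slope.mp hf).mono_left (nhdsWithin_mono _ fun y hy => ne_of_lt hy)
  refine le_of_tendsto hslope (eventually_of_mem (Ioo_mem_nhdsLT hax) fun y hy => ?_)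
  rw [slope_def_field]
  exact div_nonpos_of_nonneg_of_nonpos (sub_nonneg.2 (isMinOn_iff.1 hmin y hy))
    (sub_nonpos.2 hy.2.le)

lemma lt_of_hasDerivAt_nonneg_of_eventually_pos {f f' : ℝ → ℝ} {a b : ℝ} (hab : a < b)
    (hf : ContinuousOn f (Icc a b)) (hderiv : ∀ x ∈ Ioo a b, HasDerivAt f (f' x) x)
    (hnonneg : ∀ x ∈ Ioo a b, 0 ≤ f' x) (hpos : ∀ᶠ x in 𝓝[<] b, 0 < f' x) : f a < f b := by
  obtain ⟨m, ⟨ham, hmb⟩, hm⟩ := (mem_nhdsLT_iff_exists_mem_Ico_Ioo_subset hab).1 hpos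
  have hsub : ∀ x ∈ interior (Icc a m), x ∈ Ioo a b := by
    rw [interior_Icc]
    exact fun x hx => ⟨hx.1, hx.2.trans hmb⟩
  have hmono : MonotoneOn f (Icc a m) :=
    monotoneOn_of_deriv_nonneg (convex_Icc a m) (hf.mono (Icc_subset_Icc_right hmb.le))
      (fun x hx => (hderiv x (hsub x hx)).differentiableAt.differentiableWithinAt)
      (fun x hx => (hderiv x (hsub x hx)).deriv ▸ hnonneg x (hsub x hx))
  have hstrict : StrictMonoOn f (Icc m b) := by
    refine strictMonoOn_of_deriv_pos (convex_Icc m b) (hf.mono (Icc_subset_Icc_left ham))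
      fun x hx => ?_
    rw [interior_Icc] at hx
    exact (hderiv x ⟨ham.trans_lt hx.1, hx.2⟩).deriv ▸ hm hx
  calc f a ≤ f m := hmono (left_mem_Icc.2 ham) (right_mem_Icc.2 ham) ham
    _ < f b := hstrict (left_mem_Icc.2 hmb.le) (right_mem_Icc.2 hmb.le) hmb

lemma inv_mul_rpow_le_of_le_rpow {c p A t : ℝ} (hc : 0 < c) (hp : 0 < p) (hA : 0 ≤ A)
    (ht : 0 ≤ t) (h : t ≤ (c * A) ^ (1 / p)) : c⁻¹ * t ^ p ≤ A := by
  rwa [inv_mul_le_iff₀ hc, ← Real.le_rpow_inv_iff_of_pos ht (by positivity) hp, ← one_div]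

lemma inv_mul_rpow_lt_of_lt_rpow {c p A t : ℝ} (hc : 0 < c) (hp : 0 < p) (hA : 0 ≤ A)
    (ht : 0 ≤ t) (h : t < (c * A) ^ (1 / p)) : c⁻¹ * t ^ p < A := by
  rwa [inv_mul_lt_iff₀ hc, ← Real.lt_rpow_inv_iff_of_pos ht (by positivity) hp, ← one_div]

section Energy

variable {b δ : ℝ} {k : ℕ} {θ θ' : ℝ → ℝ}

/-- The paper's `J_δ(s) = s^{δ+1}(bθ + s^{-1}(θ')^k)`, with `s^{-1}` multiplied out. -/
noncomputable def energy (b δ : ℝ) (k : ℕ) (θ θ' : ℝ → ℝ) (s : ℝ) : ℝ :=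
  b * s ^ (δ + 1) * θ s + s ^ δ * θ' s ^ k

lemma energy_zero (hδ : 0 < δ) : energy b δ k θ θ' 0 = 0 := by
  simp [energy, Real.zero_rpow hδ.ne', Real.zero_rpow (by linarith : δ + 1 ≠ 0)]

lemma continuousOn_energy (hδ : 0 ≤ δ) (hθ : ContinuousOn θ (Ici 0))
    (hθ' : ContinuousOn θ' (Ici 0)) : ContinuousOn (energy b δ k θ θ') (Ici 0) := by
  have hpow (p : ℝ) (hp : 0 ≤ p) : ContinuousOn (fun s : ℝ => s ^ p) (Ici 0) :=
    (Real.continuous_rpow_const hp).continuousOn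
  exact ((continuousOn_const.mul (hpow _ (by linarith))).mul hθ).add
    ((hpow δ hδ).mul (hθ'.pow k))

lemma hasDerivAt_energy {n κ c q d s : ℝ} (hs : 0 < s) (hbδ : b * (δ + 1) = n)
    (hθ : HasDerivAt θ (θ' s) s) (hD : HasDerivAt (fun σ => σ ^ δ * θ' σ ^ k) d s)
    (hode : d + s ^ δ * (b * s * θ' s + κ * θ s + c⁻¹ * |θ s| ^ (q - 1) * θ s) = 0) :
    HasDerivAt (energy b δ k θ θ') (s ^ δ * ((n - κ - c⁻¹ * |θ s| ^ (q - 1)) * θ s)) s := by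
  have hpow : HasDerivAt (fun σ : ℝ => σ ^ (δ + 1)) ((δ + 1) * s ^ δ) s := by
    simpa using Real.hasDerivAt_rpow_const (p := δ + 1) (Or.inl hs.ne')
  refine (((hpow.const_mul b).mul hθ).add hD).congr_deriv ?_
  rw [Real.rpow_add_one hs.ne']
  linear_combination hode + s ^ δ * θ s * hbδ

lemma pos_of_zero_lt_energy {s : ℝ} (hb : 0 ≤ b) (hk : Odd k) (hs : 0 ≤ s) (hθs : θ s ≤ 0)
    (hJ : 0 < energy b δ k θ θ' s) : 0 < θ' s := by
  have hfirst : b * s ^ (δ + 1) * θ s ≤ 0 := mul_nonpos_of_nonneg_of_nonpos (by positivity) hθs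
  rw [← hk.pow_pos_iff]
  exact pos_of_mul_pos_right (a := s ^ δ) (by unfold energy at hJ; linarith) (by positivity)

lemma energy_pos_of_forall_Ico_pos {n κ c q s₀ : ℝ} {D : ℝ → ℝ} (hδ : 0 < δ)
    (hbδ : b * (δ + 1) = n) (hκ : κ < n) (hc : 0 < c) (hq : 1 < q)
    (hθ : ∀ s ≥ (0 : ℝ), HasDerivAt θ (θ' s) s) (hθ' : ContinuousOn θ' (Ici 0))
    (hD : ∀ s > (0 : ℝ), HasDerivAt (fun σ => σ ^ δ * θ' σ ^ k) (D s) s)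
    (hode : ∀ s > (0 : ℝ),
      D s + s ^ δ * (b * s * θ' s + κ * θ s + c⁻¹ * |θ s| ^ (q - 1) * θ s) = 0)
    (hs₀ : 0 < s₀) (hθs₀ : θ s₀ ≤ 0) (hpos : ∀ s ∈ Ico 0 s₀, 0 < θ s)
    (hbound : ∀ s ∈ Ioo 0 s₀, θ s ≤ (c * (n - κ)) ^ (1 / (q - 1))) :
    0 < energy b δ k θ θ' s₀ := by
  have hnκ : 0 ≤ n - κ := by linarith
  have hq1 : 0 < q - 1 := by linarith
  have hnear : ∀ᶠ s in 𝓝[<] s₀, θ s < (c * (n - κ)) ^ (1 / (q - 1)) :=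
    ((hθ s₀ hs₀.le).continuousAt.eventually_lt continuousAt_const
      (hθs₀.trans_lt (by positivity))).filter_mono nhdsWithin_le_nhds
  have hθc : ContinuousOn θ (Ici 0) := fun s hs => (hθ s hs).continuousAt.continuousWithinAt
  rw [← energy_zero hδ]
  refine lt_of_hasDerivAt_nonneg_of_eventually_pos hs₀
    ((continuousOn_energy hδ.le hθc hθ').mono Icc_subset_Ici_self)
    (fun s hs => hasDerivAt_energy hs.1 hbδ (hθ s hs.1.le) (hD s hs.1) (hode s hs.1))
    (fun s hs => ?_) ?_
  · have hθs := hpos s ⟨hs.1.le, hs.2⟩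
    rw [abs_of_pos hθs]
    have := inv_mul_rpow_le_of_le_rpow hc hq1 hnκ hθs.le (hbound s hs)
    exact mul_nonneg (Real.rpow_nonneg hs.1.le δ) (mul_nonneg (by linarith) hθs.le)
  · filter_upwards [Ioo_mem_nhdsLT hs₀, hnear] with s hs hθs_lt
    have hθs := hpos s ⟨hs.1.le, hs.2⟩
    rw [abs_of_pos hθs]
    have := inv_mul_rpow_lt_of_lt_rpow hc hq1 hnκ hθs.le hθs_lt
    exact mul_pos (Real.rpow_pos_of_pos hs.1 δ) (mul_pos (by linarith) hθs)

end Energy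

theorem stmt9_general (n k : ℕ) (q κ c δ b γ γunder : ℝ) (hn : 2 < n) (hk : 1 ≤ k)
    (hkodd : Odd k) (hq : (k : ℝ) < q) (hκ : κ < n)
    (hc : c = (1 / n) * (n.choose k))
    (hδ : δ = ((n : ℝ) * (k + 1) - 2 * k) / (2 * k)) (hb : b = 2 * k / (k + 1))
    (hγunder : γunder = (c * ((n : ℝ) - κ)) ^ ((1 : ℝ) / (q - 1)))
    (hγpos : 0 < γ) (hγle : γ ≤ γunder)
    (θ θ' D : ℝ → ℝ)
    (hθ : ∀ s ≥ (0 : ℝ), HasDerivAt θ (θ' s) s)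
    (hθ'cont : ContinuousOn θ' (Set.Ici 0))
    (hD : ∀ s > (0 : ℝ),
      HasDerivAt (fun σ => σ ^ δ * (θ' σ) ^ k) (D s) s)
    (hode : ∀ s > (0 : ℝ), D s +
        s ^ δ * (b * s * θ' s + κ * θ s + c⁻¹ * |θ s| ^ (q - 1) * θ s) = 0)
    (h0 : θ 0 = γ)
    (hbound : ∀ s ≥ (0 : ℝ), |θ s| ≤ γ) :
    ∀ s ≥ (0 : ℝ), 0 < θ s := by
  have hkR : (1 : ℝ) ≤ k := by exact_mod_cast hk
  have hnR : (3 : ℝ) ≤ n := by exact_mod_cast hn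
  have hq1 : 1 < q := by linarith
  have hδpos : 0 < δ := by rw [hδ]; apply div_pos <;> nlinarith
  have hbδ : b * (δ + 1) = n := by rw [hb, hδ]; field_simp; ring
  have hcpos : 0 < c := by
    refine (show 0 ≤ c by rw [hc]; positivity).lt_of_ne fun hc0 => ?_
    rw [← hc0, zero_mul, Real.zero_rpow (one_div_pos.2 (sub_pos.2 hq1)).ne'] at hγunder
    linarith
  have hθc : ContinuousOn θ (Ici 0) := fun s hs => (hθ s hs).continuousAt.continuousWithinAt
  by_contra! hneg
  obtain ⟨a, ha, hθa⟩ := hneg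
  obtain ⟨s₀, hs₀, hθs₀, hpos⟩ :=
    exists_first_nonpos_of_continuousOn ha (hθc.mono Icc_subset_Ici_self) hθa
  have hs₀pos : 0 < s₀ := hs₀.1.lt_of_ne (by rintro rfl; linarith)
  have hJ : 0 < energy b δ k θ θ' s₀ :=
    energy_pos_of_forall_Ico_pos hδpos hbδ hκ hcpos hq1 hθ hθ'cont hD hode hs₀pos hθs₀ hpos
      fun s hs => hγunder ▸ (le_abs_self _).trans ((hbound s hs.1.le).trans hγle)
  have hθ's₀ : 0 < θ' s₀ :=
    pos_of_zero_lt_energy (by rw [hb]; positivity) hkodd hs₀.1 hθs₀ hJ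
  exact hθ's₀.not_ge <| (hθ s₀ hs₀.1).nonpos_of_isMinOn_Ioo hs₀pos <|
    isMinOn_iff.2 fun s hs => hθs₀.trans (hpos s ⟨hs.1.le, hs.2⟩).le

/-- Positivity of small solutions: if `κ < n` and `0 < γ ≤ γ̲ = (c_{n,k}(n-κ))^{1/(q-1)}`,
then the solution `θ` of `(s^δ(θ')^k)' + s^δ(b s θ' + κθ + c_{n,k}^{-1}|θ|^{q-1}θ) = 0`
with `θ(0) = γ`, `θ'(0) = 0` and `|θ| ≤ γ` is strictly positive on `[0,∞)`. -/
theorem stmt9 (n k : ℕ) (q κ c δ b γ γunder : ℝ) (hn : 2 < n) (hk : 1 ≤ k)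
    (hkodd : Odd k) (hq : (k : ℝ) < q) (hκ : κ < n)
    (hc : c = (1 / n) * (n.choose k))
    (hδ : δ = ((n : ℝ) * (k + 1) - 2 * k) / (2 * k)) (hb : b = 2 * k / (k + 1))
    (hγunder : γunder = (c * ((n : ℝ) - κ)) ^ ((1 : ℝ) / (q - 1)))
    (hγpos : 0 < γ) (hγle : γ ≤ γunder)
    (θ θ' D : ℝ → ℝ)
    (hθ : ∀ s ≥ (0 : ℝ), HasDerivAt θ (θ' s) s)
    (hθ'cont : ContinuousOn θ' (Set.Ici 0))
    (hD : ∀ s > (0 : ℝ),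
      HasDerivAt (fun σ => σ ^ δ * (θ' σ) ^ k) (D s) s)
    (hode : ∀ s > (0 : ℝ), D s +
        s ^ δ * (b * s * θ' s + κ * θ s + c⁻¹ * |θ s| ^ (q - 1) * θ s) = 0)
    (h0 : θ 0 = γ) (h0' : θ' 0 = 0)
    (hbound : ∀ s ≥ (0 : ℝ), |θ s| ≤ γ) :
    ∀ s ≥ (0 : ℝ), 0 < θ s :=
  stmt9_general n k q κ c δ b γ γunder hn hk hkodd hq hκ hc hδ hb hγunder hγpos hγle θ θ' D hθ
    hθ'cont hD hode h0 hbound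
end

section
/- Let n > 2, q > (n+2)/(n-2), κ = 4/(q-1), A = (κ(κ+2)/(n-2-κ))^{1/(q-1)}, B = 1/(n-2-κ). Then v(r) = A(1 + B r²)^{-2/(q-1)} satisfies the equation (r^{n-1} v')' + r^{n-1}(r v' + κ v + |v|^{q-1}v) = 0 for all r > 0, together with v(0) = A and v'(0) = 0. -/
/-- The explicit slow-decay profile for `k = 1`. -/
noncomputable def explicitProfile (q A B : ℝ) : ℝ → ℝ :=
  fun r => A * (1 + B * r ^ 2) ^ (-(2 : ℝ) / (q - 1))

/-!
With `u = 1 + B r²` and `p = -2/(q-1) = -κ/2`, every term of the equation is `A r^{n-1} u^{p-2}`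
times a polynomial in `r²`; the nonlinearity contributes `A^{q-1} = κ(κ+2)B` because
`p(q-1) = -2`. The `r⁴` coefficients of that polynomial cancel identically, and the `r⁰` and `r²`
coefficients are multiples of `1 - B(n-2-κ)`, which is what fixes `A` and `B`.
-/

open Real

section OneAddSqRpow

variable {A B p : ℝ}

theorem hasDerivAt_mul_one_add_sq_rpow (hB : 0 ≤ B) (r : ℝ) :
    HasDerivAt (fun r => A * (1 + B * r ^ 2) ^ p)
      (2 * A * B * p * r * (1 + B * r ^ 2) ^ (p - 1)) r := by
  have hu : HasDerivAt (fun r => 1 + B * r ^ 2) (2 * B * r) r := by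
    simpa [mul_comm, mul_left_comm] using ((hasDerivAt_pow 2 r).const_mul B).const_add 1
  exact ((hu.rpow_const (Or.inl (by positivity))).const_mul A).congr_deriv (by ring)

theorem deriv_mul_one_add_sq_rpow (hB : 0 ≤ B) :
    deriv (fun r => A * (1 + B * r ^ 2) ^ p) =
      fun r => 2 * A * B * p * r * (1 + B * r ^ 2) ^ (p - 1) :=
  funext fun r => (hasDerivAt_mul_one_add_sq_rpow hB r).deriv

theorem hasDerivAt_rpow_mul_deriv_mul_one_add_sq_rpow (hB : 0 ≤ B) (m : ℝ) {r : ℝ}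
    (hr : 0 < r) :
    HasDerivAt (fun ρ => ρ ^ m * deriv (fun r => A * (1 + B * r ^ 2) ^ p) ρ)
      (2 * A * B * p * r ^ m * (1 + B * r ^ 2) ^ (p - 2) *
        ((m + 1) * (1 + B * r ^ 2) + 2 * (p - 1) * B * r ^ 2)) r := by
  have hu : 0 < 1 + B * r ^ 2 := by positivity
  have hflux : (fun ρ => ρ ^ m * deriv (fun r => A * (1 + B * r ^ 2) ^ p) ρ) =
      fun ρ => ρ ^ m * (ρ * (2 * A * B * p * (1 + B * ρ ^ 2) ^ (p - 1))) := by
    rw [deriv_mul_one_add_sq_rpow hB]; funext ρ; ring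
  have hu_pow : (1 + B * r ^ 2) ^ (p - 1) = (1 + B * r ^ 2) ^ (p - 2) * (1 + B * r ^ 2) := by
    rw [← rpow_add_one hu.ne']; ring_nf
  rw [hflux]
  refine ((hasDerivAt_rpow_const (Or.inl hr.ne')).mul
    ((hasDerivAt_id' r).mul (hasDerivAt_mul_one_add_sq_rpow hB r))).congr_deriv ?_
  simp only [Pi.mul_apply]
  rw [rpow_sub_one hr.ne', sub_sub, one_add_one_eq_two, hu_pow]
  field_simp
  ring

end OneAddSqRpow

theorem abs_mul_rpow_rpow_mul_self {A u p q : ℝ} (hA : 0 ≤ A) (hu : 0 < u)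
    (hpq : p * (q - 1) = -2) :
    |A * u ^ p| ^ (q - 1) * (A * u ^ p) = A ^ (q - 1) * A * u ^ (p - 2) := by
  rw [abs_of_nonneg (by positivity), mul_rpow hA (by positivity), ← rpow_mul hu.le, hpq]
  have : u ^ (-2 : ℝ) * u ^ p = u ^ (p - 2) := by rw [← rpow_add hu]; ring_nf
  linear_combination A ^ (q - 1) * A * this

theorem one_lt_and_four_div_lt_of_div_lt {n q : ℝ} (hn : 2 < n)
    (hq : (n + 2) / (n - 2) < q) : 1 < q ∧ 4 / (q - 1) < n - 2 := by
  have hn₂ : 0 < n - 2 := by linarith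
  have hq' : n + 2 < q * (n - 2) := (div_lt_iff₀ hn₂).1 hq
  have hq₁ : 1 < q := by nlinarith
  exact ⟨hq₁, (div_lt_iff₀ (by linarith)).2 (by nlinarith)⟩

theorem explicitProfile_radial_eq {n q κ A B r : ℝ} (hq : q ≠ 1) (hκ : κ = 4 / (q - 1))
    (hA : 0 ≤ A) (hB : 0 ≤ B) (hAq : A ^ (q - 1) = κ * (κ + 2) * B)
    (hnB : B * (n - 2 - κ) = 1) (hr : 0 < r) :
    deriv (fun ρ => ρ ^ (n - 1) * deriv (explicitProfile q A B) ρ) r +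
      r ^ (n - 1) * (r * deriv (explicitProfile q A B) r + κ * explicitProfile q A B r +
        |explicitProfile q A B r| ^ (q - 1) * explicitProfile q A B r) = 0 := by
  unfold explicitProfile
  set p := -(2 : ℝ) / (q - 1)
  have hu : 0 < 1 + B * r ^ 2 := by positivity
  have hpq : p * (q - 1) = -2 := div_mul_cancel₀ _ (sub_ne_zero.2 hq)
  have hu_pow₁ : (1 + B * r ^ 2) ^ (p - 1) = (1 + B * r ^ 2) ^ (p - 2) * (1 + B * r ^ 2) := by
    rw [← rpow_add_one hu.ne']; ring_nf
  have hu_pow₀ : (1 + B * r ^ 2) ^ p = (1 + B * r ^ 2) ^ (p - 2) * (1 + B * r ^ 2) ^ 2 := by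
    rw [← rpow_natCast (1 + B * r ^ 2) 2, ← rpow_add hu]; norm_num
  rw [(hasDerivAt_rpow_mul_deriv_mul_one_add_sq_rpow hB (n - 1) hr).deriv,
    (hasDerivAt_mul_one_add_sq_rpow hB r).deriv, abs_mul_rpow_rpow_mul_self hA hu hpq, hAq,
    hu_pow₁, hu_pow₀]
  subst hκ
  -- divided by `A r^{n-1} u^{p-2}`, the left side is `κ u (1 - B(n-2-κ))`
  linear_combination (-A * r ^ (n - 1) * (1 + B * r ^ 2) ^ (p - 2) * (4 / (q - 1)) *
    (1 + B * r ^ 2)) * hnB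

/-- For supercritical `q > (n+2)/(n-2)`, `κ = 4/(q-1)`,
`A = (κ(κ+2)/(n-2-κ))^{1/(q-1)}` and `B = 1/(n-2-κ)`, the function
`v(r) = A(1+Br²)^{-2/(q-1)}` solves
`(r^{n-1}v')' + r^{n-1}(r v' + κ v + |v|^{q-1}v) = 0` with `v(0) = A`, `v'(0) = 0`. -/
theorem stmt15 (n : ℕ) (q κ A B : ℝ) (hn : 2 < n)
    (hq : ((n : ℝ) + 2) / ((n : ℝ) - 2) < q)
    (hκ : κ = 4 / (q - 1))
    (hA : A = (κ * (κ + 2) / ((n : ℝ) - 2 - κ)) ^ ((1 : ℝ) / (q - 1)))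
    (hB : B = 1 / ((n : ℝ) - 2 - κ)) :
    (∀ r > (0 : ℝ),
      deriv (fun ρ => ρ ^ ((n : ℝ) - 1) * deriv (explicitProfile q A B) ρ) r +
        r ^ ((n : ℝ) - 1) * (r * deriv (explicitProfile q A B) r +
          κ * explicitProfile q A B r +
          |explicitProfile q A B r| ^ (q - 1) * explicitProfile q A B r) = 0) ∧
    explicitProfile q A B 0 = A ∧ deriv (explicitProfile q A B) 0 = 0 := by
  obtain ⟨hq₁, hκn⟩ := one_lt_and_four_div_lt_of_div_lt (by exact_mod_cast hn) hq
  have hκ₀ : 0 < κ := hκ ▸ div_pos four_pos (sub_pos.2 hq₁)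
  have hgap : 0 < (n : ℝ) - 2 - κ := by linarith
  have hB₀ : 0 ≤ B := hB ▸ (one_div_pos.2 hgap).le
  have hbase : 0 ≤ κ * (κ + 2) / ((n : ℝ) - 2 - κ) := by positivity
  have hA₀ : 0 ≤ A := hA ▸ rpow_nonneg hbase _
  have hAq : A ^ (q - 1) = κ * (κ + 2) * B := by
    rw [hA, ← rpow_mul hbase, one_div_mul_cancel (by linarith), rpow_one, hB, mul_one_div]
  have hnB : B * ((n : ℝ) - 2 - κ) = 1 := by rw [hB, one_div_mul_cancel hgap.ne']
  refine ⟨fun r hr => explicitProfile_radial_eq hq₁.ne' hκ hA₀ hB₀ hAq hnB hr,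
    by simp [explicitProfile], ?_⟩
  exact (hasDerivAt_mul_one_add_sq_rpow hB₀ 0).deriv.trans (by ring)
end
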